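/- For every k ≥ 2 there exist two DFAs A and B over the alphabet {0,1}, each with exactly k states, such that L(A) ≠ L(B) and every string of length strictly less than 2k − 2 is in L(A) if and only if it is in L(B); that is, the shortest distinguishing string has length exactly 2k − 2. -/
import Mathlib

def stepA (k : ℕ) (i : Fin k) (c : Fin 2) : Fin k :=
  if c = 0 then ⟨min (i.val + 1) (k - 1), by have := i.2; omega⟩
  else if i.val = k - 1 then i else ⟨i.val - 1, by have := i.2; omega⟩

def stepB (k : ℕ) (i : Fin k) (c : Fin 2) : Fin k :=
  if c = 0 then ⟨min (i.val + 1) (k - 1), by have := i.2; omega⟩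
  else ⟨i.val - 1, by have := i.2; omega⟩

def dA (k : ℕ) (hk : 2 ≤ k) : DFA (Fin 2) (Fin k) :=
  ⟨stepA k, ⟨0, by omega⟩, {i | i.val ≠ 0}⟩

def dB (k : ℕ) (hk : 2 ≤ k) : DFA (Fin 2) (Fin k) :=
  ⟨stepB k, ⟨0, by omega⟩, {i | i.val ≠ 0}⟩

lemma dfa_inv (k : ℕ) (hk : 2 ≤ k) (z : List (Fin 2)) :
    ((dB k hk).eval z).val ≤ ((dA k hk).eval z).val ∧
    (((dA k hk).eval z).val = ((dB k hk).eval z).val ∨ ((dA k hk).eval z).val = k - 1) ∧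
    ((dA k hk).eval z).val + (((dA k hk).eval z).val - ((dB k hk).eval z).val) ≤ z.length := by
  induction z using List.reverseRecOn with
  | nil => simp [DFA.eval, DFA.evalFrom, dA, dB]
  | append_singleton z c ih =>
    obtain ⟨h1, h2, h3⟩ := ih
    have ha := ((dA k hk).eval z).2
    have hb := ((dB k hk).eval z).2
    rw [DFA.eval_append_singleton, DFA.eval_append_singleton]
    have hsA : (dA k hk).step = stepA k := rfl
    have hsB : (dB k hk).step = stepB k := rfl
    rw [hsA, hsB]
    fin_cases c <;> simp only [stepA, stepB, List.length_append, List.length_singleton] <;>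
      split_ifs <;> simp_all <;> omega

lemma evalA_zeros (k : ℕ) (hk : 2 ≤ k) (m : ℕ) (s : Fin k) :
    ((dA k hk).evalFrom s (List.replicate m 0)).val = min (s.val + m) (k - 1) := by
  induction m generalizing s with
  | zero => simp [DFA.evalFrom]; have := s.2; omega
  | succ n ih =>
    rw [List.replicate_succ]
    show ((dA k hk).evalFrom (stepA k s 0) (List.replicate n 0)).val = _
    rw [ih]
    simp [stepA]
    omega

lemma evalB_zeros (k : ℕ) (hk : 2 ≤ k) (m : ℕ) (s : Fin k) :
    ((dB k hk).evalFrom s (List.replicate m 0)).val = min (s.val + m) (k - 1) := by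
  induction m generalizing s with
  | zero => simp [DFA.evalFrom]; have := s.2; omega
  | succ n ih =>
    rw [List.replicate_succ]
    show ((dB k hk).evalFrom (stepB k s 0) (List.replicate n 0)).val = _
    rw [ih]
    simp [stepB]
    omega

lemma evalA_ones (k : ℕ) (hk : 2 ≤ k) (m : ℕ) (s : Fin k) (hs : s.val = k - 1) :
    ((dA k hk).evalFrom s (List.replicate m 1)).val = k - 1 := by
  induction m generalizing s with
  | zero => simpa [DFA.evalFrom]
  | succ n ih =>
    rw [List.replicate_succ]
    show ((dA k hk).evalFrom (stepA k s 1) (List.replicate n 1)).val = _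
    apply ih
    simp [stepA, hs]

lemma evalB_ones (k : ℕ) (hk : 2 ≤ k) (m : ℕ) (s : Fin k) :
    ((dB k hk).evalFrom s (List.replicate m 1)).val = s.val - m := by
  induction m generalizing s with
  | zero => simp [DFA.evalFrom]
  | succ n ih =>
    rw [List.replicate_succ]
    show ((dB k hk).evalFrom (stepB k s 1) (List.replicate n 1)).val = _
    rw [ih]
    simp [stepB]
    omega

theorem stmt_8 (k : ℕ) (hk : 2 ≤ k) :
    ∃ A B : DFA (Fin 2) (Fin k),
      A.accepts ≠ B.accepts ∧
      (∀ z : List (Fin 2), z.length < 2 * k - 2 →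
        (z ∈ A.accepts ↔ z ∈ B.accepts)) ∧
      (∃ z : List (Fin 2), z.length = 2 * k - 2 ∧
        Xor' (z ∈ A.accepts) (z ∈ B.accepts)) := by
  refine ⟨dA k hk, dB k hk, ?_, ?_, ?_⟩
  case _ =>
    intro h
    have hA : List.replicate (k - 1) 0 ++ List.replicate (k - 1) 1 ∈ (dA k hk).accepts := by
      rw [DFA.mem_accepts]
      show ((dA k hk).eval _).val ≠ 0
      rw [DFA.eval, DFA.evalFrom_of_append,
        evalA_ones k hk _ _ (by rw [evalA_zeros]; show min ((0:ℕ) + (k-1)) (k-1) = k - 1; omega)]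
      omega
    have hB : List.replicate (k - 1) 0 ++ List.replicate (k - 1) 1 ∉ (dB k hk).accepts := by
      rw [DFA.mem_accepts]
      show ¬((dB k hk).eval _).val ≠ 0
      rw [DFA.eval, DFA.evalFrom_of_append, evalB_ones, evalB_zeros]
      show ¬(min ((0:ℕ) + (k-1)) (k-1) - (k-1) ≠ 0)
      omega
    rw [h] at hA
    exact hB hA
  case _ =>
    intro z hz
    obtain ⟨h1, h2, h3⟩ := dfa_inv k hk z
    rw [DFA.mem_accepts, DFA.mem_accepts]
    show ((dA k hk).eval z).val ≠ 0 ↔ ((dB k hk).eval z).val ≠ 0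
    omega
  case _ =>
    refine ⟨List.replicate (k - 1) 0 ++ List.replicate (k - 1) 1, ?_, ?_⟩
    · simp; omega
    · have hA : ((dA k hk).eval (List.replicate (k - 1) 0 ++ List.replicate (k - 1) 1)).val = k - 1 := by
        rw [DFA.eval, DFA.evalFrom_of_append]
        apply evalA_ones
        rw [evalA_zeros]
        show min ((0:ℕ) + (k-1)) (k-1) = k - 1
        omega
      have hB : ((dB k hk).eval (List.replicate (k - 1) 0 ++ List.replicate (k - 1) 1)).val = 0 := by
        rw [DFA.eval, DFA.evalFrom_of_append, evalB_ones, evalB_zeros]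
        show min ((0:ℕ) + (k-1)) (k-1) - (k-1) = 0
        omega
      rw [DFA.mem_accepts, DFA.mem_accepts]
      show Xor' (((dA k hk).eval _).val ≠ 0) (((dB k hk).eval _).val ≠ 0)
      rw [hA, hB]
      simp [Xor']
      omega
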